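/- arXiv:1605.00137 — 5 statements merged into one kernel-verified Lean document; each statement's English description precedes it below -/
import Mathlib

section
/- Let n ≥ 2, p ∈ (0,1), q = 1 - p, and let W_{n,p} have distribution WGeo(n,p). Then for every integer a ≥ 1, Pr[W_{n,p} = a] = C(n,a)·p^a·∑_{b=0}^{n-a} C(n-a,b)·(-1)^b/(1 - q^(a+b)), where C(·,·) denotes binomial coefficients. -/
open MeasureTheory ProbabilityTheory

lemma geo_zero {Ω : Type*} [MeasurableSpace Ω] (μ : Measure Ω) [IsProbabilityMeasure μ]
    {p : ℝ} (hp : p ∈ Set.Ioo (0 : ℝ) 1) (f : Ω → ℕ) (hf : Measurable f)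
    (hg : ∀ m : ℕ, 1 ≤ m → μ {ω | f ω = m} = ENNReal.ofReal ((1 - p) ^ (m - 1) * p)) :
    μ {ω | f ω = 0} = 0 := by
  set q := 1 - p with hq
  have hq0 : 0 ≤ q := by simp [hq]; linarith [hp.2]
  have hq1 : q < 1 := by simp [hq]; linarith [hp.1]
  have hmeasm : ∀ m : ℕ, MeasurableSet {ω | f ω = m} := fun m =>
    hf (measurableSet_singleton m)
  have hdisj : Pairwise (Function.onFun Disjoint fun m : ℕ => {ω | f ω = m + 1}) := by
    intro i j hij
    simp only [Function.onFun, Set.disjoint_left]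
    intro ω h1 h2
    simp only [Set.mem_setOf_eq] at h1 h2
    omega
  have hU : μ (⋃ m : ℕ, {ω | f ω = m + 1}) = 1 := by
    rw [measure_iUnion hdisj (fun m => hmeasm (m + 1))]
    have : ∀ m : ℕ, μ {ω | f ω = m + 1} = ENNReal.ofReal (q ^ m * p) := by
      intro m
      rw [hg (m + 1) (by omega)]
      simp
    rw [tsum_congr this, ← ENNReal.ofReal_tsum_of_nonneg
      (fun m => mul_nonneg (pow_nonneg hq0 m) (le_of_lt hp.1))
      ((summable_geometric_of_lt_one hq0 hq1).mul_right p)]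
    rw [tsum_mul_right, tsum_geometric_of_lt_one hq0 hq1]
    have : (1 - q)⁻¹ * p = 1 := by
      rw [hq]
      have : (1 : ℝ) - (1 - p) = p := by ring
      rw [this, inv_mul_cancel₀ (ne_of_gt hp.1)]
    rw [this, ENNReal.ofReal_one]
  have hcompl : {ω | f ω = 0} = (⋃ m : ℕ, {ω | f ω = m + 1})ᶜ := by
    ext ω
    simp only [Set.mem_setOf_eq, Set.mem_compl_iff, Set.mem_iUnion]
    constructor
    · intro h ⟨m, hm⟩; omega
    · intro h; by_contra h0; exact h ⟨f ω - 1, by omega⟩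
  rw [hcompl, measure_compl (MeasurableSet.iUnion (fun m => hmeasm (m + 1)))
    (measure_ne_top μ _), hU, measure_univ, tsub_self]

lemma geo_lt {Ω : Type*} [MeasurableSpace Ω] (μ : Measure Ω) [IsProbabilityMeasure μ]
    {p : ℝ} (hp : p ∈ Set.Ioo (0 : ℝ) 1) (f : Ω → ℕ) (hf : Measurable f)
    (hg : ∀ m : ℕ, 1 ≤ m → μ {ω | f ω = m} = ENNReal.ofReal ((1 - p) ^ (m - 1) * p))
    (m : ℕ) : μ {ω | f ω < m + 1} = ENNReal.ofReal (1 - (1 - p) ^ m) := by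
  set q := 1 - p with hq
  have hq0 : 0 ≤ q := by simp [hq]; linarith [hp.2]
  have hq1 : q < 1 := by simp [hq]; linarith [hp.1]
  have hmeasm : ∀ k : ℕ, MeasurableSet {ω | f ω = k} := fun k =>
    hf (measurableSet_singleton k)
  have hset : {ω | f ω < m + 1} = ⋃ k ∈ Finset.range (m + 1), {ω | f ω = k} := by
    ext ω
    simp only [Set.mem_setOf_eq, Set.mem_iUnion, Finset.mem_range]
    constructor
    · intro h; exact ⟨f ω, h, rfl⟩
    · rintro ⟨k, hk, rfl⟩; exact hk
  rw [hset, measure_biUnion_finset ?_ (fun k _ => hmeasm k)]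
  · rw [Finset.sum_range_succ']
    have h0 : μ {ω | f ω = 0} = 0 := geo_zero μ hp f hf hg
    rw [h0, add_zero]
    have : ∀ k, μ {ω | f ω = k + 1} = ENNReal.ofReal (q ^ k * p) := by
      intro k; rw [hg (k + 1) (by omega)]; simp
    rw [Finset.sum_congr rfl (fun k _ => this k),
      ← ENNReal.ofReal_sum_of_nonneg
        (fun k _ => mul_nonneg (pow_nonneg hq0 k) (le_of_lt hp.1))]
    congr 1
    have hq1p : q - 1 = -p := by rw [hq]; ring
    rw [← Finset.sum_mul, geom_sum_eq (by linarith : q ≠ 1), hq1p, div_neg, neg_mul,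
      div_mul_cancel₀ _ (ne_of_gt hp.1)]
    ring
  · intro i _ j _ hij
    simp only [Function.onFun, Set.disjoint_left]
    intro ω h1 h2
    simp only [Set.mem_setOf_eq] at h1 h2
    omega

lemma real_sum {q : ℝ} (hq0 : 0 ≤ q) (hq1 : q < 1) (a c : ℕ) (ha : 1 ≤ a) :
    ∑' m : ℕ, (q ^ m) ^ a * (1 - q ^ m) ^ c
      = ∑ b ∈ Finset.range (c + 1), (c.choose b : ℝ) * (-1) ^ b / (1 - q ^ (a + b)) := by
  have hqab : ∀ b : ℕ, q ^ (a + b) < 1 := fun b =>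
    pow_lt_one₀ hq0 hq1 (by omega)
  have hqab0 : ∀ b : ℕ, 0 ≤ q ^ (a + b) := fun b => pow_nonneg hq0 _
  have key : ∀ m : ℕ, (q ^ m) ^ a * (1 - q ^ m) ^ c
      = ∑ b ∈ Finset.range (c + 1), (c.choose b : ℝ) * (-1) ^ b * (q ^ (a + b)) ^ m := by
    intro m
    have hbin : (1 - q ^ m) ^ c = ∑ b ∈ Finset.range (c + 1),
        (-(q ^ m)) ^ b * (1 : ℝ) ^ (c - b) * (c.choose b) := by
      rw [← add_pow]
      ring_nf
    rw [hbin, Finset.mul_sum]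
    refine Finset.sum_congr rfl fun b _ => ?_
    have h2 : (q ^ (a + b)) ^ m = (q ^ m) ^ a * (q ^ m) ^ b := by
      rw [← pow_mul, ← pow_mul, ← pow_mul, ← pow_add]
      congr 1
      ring
    rw [h2, neg_pow, one_pow]
    ring
  rw [tsum_congr key, Summable.tsum_finsetSum (fun b _ =>
    ((summable_geometric_of_lt_one (hqab0 b) (hqab b)).mul_left _))]
  refine Finset.sum_congr rfl fun b _ => ?_
  rw [tsum_mul_left, tsum_geometric_of_lt_one (hqab0 b) (hqab b), div_eq_mul_inv]

/-- For `W_{n,p} ~ WGeo(n,p)` (the number of variables attaining the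
maximum of `n ≥ 2` independent `Geo(p)` variables), `q = 1 - p`, and every integer `a ≥ 1`,
`Pr[W_{n,p} = a] = C(n,a)·p^a·∑_{b=0}^{n-a} C(n-a,b)·(-1)^b/(1 - q^(a+b))`. -/
theorem lge_winners_prob
    {Ω : Type*} [MeasurableSpace Ω] (μ : Measure Ω) [IsProbabilityMeasure μ]
    (n : ℕ) (hn : 2 ≤ n) (p : ℝ) (hp : p ∈ Set.Ioo (0 : ℝ) 1)
    (X : Fin n → Ω → ℕ)
    (hmeas : ∀ i, Measurable (X i))
    (hindep : iIndepFun X μ)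
    (hgeom : ∀ i, ∀ m : ℕ, 1 ≤ m →
      μ {ω | X i ω = m} = ENNReal.ofReal ((1 - p) ^ (m - 1) * p))
    (a : ℕ) (ha : 1 ≤ a) :
    (μ {ω | (Finset.univ.filter
        fun i => X i ω = Finset.univ.sup fun j => X j ω).card = a}).toReal
      = (n.choose a : ℝ) * p ^ a *
          ∑ b ∈ Finset.range (n - a + 1),
            ((n - a).choose b : ℝ) * (-1) ^ b / (1 - (1 - p) ^ (a + b)) := by

  classical
  by_cases han : a ≤ n
  swap
  · push_neg at han
    have h1 : {ω | (Finset.univ.filter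
        fun i => X i ω = Finset.univ.sup fun j => X j ω).card = a} = ∅ := by
      ext ω
      simp only [Set.mem_setOf_eq, Set.mem_empty_iff_false, iff_false]
      intro h
      have hle := Finset.card_filter_le Finset.univ
        (fun i => X i ω = Finset.univ.sup fun j => X j ω)
      rw [h, Finset.card_univ, Fintype.card_fin] at hle
      omega
    rw [h1, measure_empty, ENNReal.toReal_zero, Nat.choose_eq_zero_of_lt han]
    simp
  have hq0 : 0 ≤ 1 - p := by linarith [hp.2]
  have hq1 : 1 - p < 1 := by linarith [hp.1]
  set q : ℝ := 1 - p with hq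
  set E := {ω | (Finset.univ.filter
      fun i => X i ω = Finset.univ.sup fun j => X j ω).card = a} with hE
  set 𝒮 := Finset.powersetCard a (Finset.univ : Finset (Fin n)) with h𝒮
  set D : Finset (Fin n) → ℕ → Set Ω := fun S m =>
    ⋂ i ∈ (Finset.univ : Finset (Fin n)),
      X i ⁻¹' (if i ∈ S then {m} else Set.Iio m) with hD
  have hDmem : ∀ S m ω, ω ∈ D S m ↔
      (∀ i ∈ S, X i ω = m) ∧ ∀ j, j ∉ S → X j ω < m := by
    intro S m ω
    simp only [hD, Set.mem_iInter, Set.mem_preimage]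
    constructor
    · intro h
      refine ⟨fun i hi => ?_, fun j hj => ?_⟩
      · have := h i (Finset.mem_univ i); rw [if_pos hi] at this; exact this
      · have := h j (Finset.mem_univ j); rw [if_neg hj] at this; exact this
    · rintro ⟨h1, h2⟩ i _
      by_cases hi : i ∈ S
      · rw [if_pos hi]; exact h1 i hi
      · rw [if_neg hi]; exact h2 i hi
  have hDmeas : ∀ S m, MeasurableSet (D S m) := by
    intro S m
    apply Finset.measurableSet_biInter
    intro i _
    exact (hmeas i) (by split_ifs; exacts [measurableSet_singleton m, measurableSet_Iio])
  have key : ∀ S ∈ 𝒮, ∀ m ω, ω ∈ D S (m + 1) →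
      (Finset.univ.sup fun j => X j ω) = m + 1 ∧
      (Finset.univ.filter fun i => X i ω = Finset.univ.sup fun j => X j ω) = S := by
    intro S hS m ω hω
    rw [hDmem] at hω
    obtain ⟨h1, h2⟩ := hω
    have hcard : S.card = a := (Finset.mem_powersetCard.mp hS).2
    obtain ⟨i0, hi0⟩ := Finset.card_pos.mp (by rw [hcard]; omega : 0 < S.card)
    have hsup : (Finset.univ.sup fun j => X j ω) = m + 1 := by
      apply le_antisymm
      · apply Finset.sup_le
        intro j _
        by_cases hj : j ∈ S
        · rw [h1 j hj]
        · exact le_of_lt (h2 j hj)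
      · rw [← h1 i0 hi0]; exact Finset.le_sup (f := fun j => X j ω) (Finset.mem_univ i0)
    refine ⟨hsup, ?_⟩
    ext i
    simp only [Finset.mem_filter, Finset.mem_univ, true_and, hsup]
    constructor
    · intro hXi
      by_contra hi
      exact absurd hXi (ne_of_lt (h2 i hi))
    · exact h1 i
  set U := ⋃ m : ℕ, ⋃ S ∈ 𝒮, D S (m + 1) with hU
  have hUE : U ⊆ E := by
    intro ω hω
    simp only [hU, Set.mem_iUnion] at hω
    obtain ⟨m, S, hS, hω⟩ := hω
    obtain ⟨_, hfil⟩ := key S hS m ω hω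
    simp only [hE, Set.mem_setOf_eq, hfil]
    exact (Finset.mem_powersetCard.mp hS).2
  have hN : μ {ω | X ⟨0, by omega⟩ ω = 0} = 0 :=
    geo_zero μ hp _ (hmeas _) (hgeom _)
  have hEN : E ⊆ U ∪ {ω | X ⟨0, by omega⟩ ω = 0} := by
    intro ω hω
    simp only [hE, Set.mem_setOf_eq] at hω
    by_cases hM : (Finset.univ.sup fun j => X j ω) = 0
    · right
      have hle : X ⟨0, by omega⟩ ω ≤ Finset.univ.sup fun j => X j ω :=
        Finset.le_sup (f := fun j => X j ω) (Finset.mem_univ (⟨0, by omega⟩ : Fin n))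
      simp only [Set.mem_setOf_eq]
      omega
    · left
      obtain ⟨m, hm⟩ : ∃ m, (Finset.univ.sup fun j => X j ω) = m + 1 :=
        ⟨(Finset.univ.sup fun j => X j ω) - 1, by omega⟩
      simp only [hU, Set.mem_iUnion]
      refine ⟨m, Finset.univ.filter fun i => X i ω = Finset.univ.sup fun j => X j ω,
        Finset.mem_powersetCard.mpr ⟨Finset.filter_subset _ _, hω⟩, ?_⟩
      rw [hDmem]
      constructor
      · intro i hi
        rw [← hm]
        exact (Finset.mem_filter.mp hi).2
      · intro j hj
        have hne : X j ω ≠ Finset.univ.sup fun j => X j ω := by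
          intro h; exact hj (Finset.mem_filter.mpr ⟨Finset.mem_univ j, h⟩)
        have hle : X j ω ≤ Finset.univ.sup fun j => X j ω :=
          Finset.le_sup (f := fun j => X j ω) (Finset.mem_univ j)
        rw [← hm]
        exact lt_of_le_of_ne hle hne
  have hmuE : μ E = μ U := by
    refine le_antisymm ?_ (measure_mono hUE)
    calc μ E ≤ μ (U ∪ {ω | X ⟨0, by omega⟩ ω = 0}) := measure_mono hEN
      _ ≤ μ U + μ {ω | X ⟨0, by omega⟩ ω = 0} := measure_union_le _ _
      _ = μ U := by rw [hN, add_zero]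
  -- measure of each D S (m+1)
  have hDmu : ∀ S ∈ 𝒮, ∀ m : ℕ, μ (D S (m + 1)) =
      (ENNReal.ofReal (q ^ m * p)) ^ a * (ENNReal.ofReal (1 - q ^ m)) ^ (n - a) := by
    intro S hS m
    have hcard : S.card = a := (Finset.mem_powersetCard.mp hS).2
    rw [hD]
    rw [hindep.measure_inter_preimage_eq_mul Finset.univ
      (fun i _ => by split_ifs
                     exacts [measurableSet_singleton _, measurableSet_Iio])]
    have hterm : ∀ i : Fin n,
        μ (X i ⁻¹' (if i ∈ S then ({m + 1} : Set ℕ) else Set.Iio (m + 1)))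
        = if i ∈ S then ENNReal.ofReal (q ^ m * p) else ENNReal.ofReal (1 - q ^ m) := by
      intro i
      split_ifs with hi
      · have hpre : X i ⁻¹' ({m + 1} : Set ℕ) = {ω | X i ω = m + 1} := rfl
        rw [hpre, hgeom i (m + 1) (by omega)]
        simp
      · have hpre : X i ⁻¹' Set.Iio (m + 1) = {ω | X i ω < m + 1} := rfl
        rw [hpre, geo_lt μ hp (X i) (hmeas i) (hgeom i) m]
    rw [Finset.prod_congr rfl (fun i _ => hterm i), Finset.prod_ite]
    rw [Finset.prod_const, Finset.prod_const]
    have hf1 : Finset.univ.filter (fun i => i ∈ S) = S := by ext x; simp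
    have hf2 : Finset.univ.filter (fun i => ¬ i ∈ S) = Sᶜ := by ext x; simp
    rw [hf1, hf2, hcard, Finset.card_compl, Fintype.card_fin, hcard]
  -- measure of U
  have hVdisj : Pairwise (Function.onFun Disjoint fun m : ℕ => ⋃ S ∈ 𝒮, D S (m + 1)) := by
    intro m k hmk
    simp only [Function.onFun, Set.disjoint_left]
    intro ω h1 h2
    simp only [Set.mem_iUnion] at h1 h2
    obtain ⟨S, hS, h1⟩ := h1
    obtain ⟨T, hT, h2⟩ := h2
    have e1 := (key S hS m ω h1).1
    have e2 := (key T hT k ω h2).1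
    omega
  have hSdisj : ∀ m : ℕ, (↑𝒮 : Set (Finset (Fin n))).PairwiseDisjoint
      (fun S => D S (m + 1)) := by
    intro m S hS T hT hST
    simp only [Function.onFun, Set.disjoint_left]
    intro ω h1 h2
    have e1 := (key S (Finset.mem_coe.mp hS) m ω h1).2
    have e2 := (key T (Finset.mem_coe.mp hT) m ω h2).2
    exact hST (e1 ▸ e2.symm ▸ rfl)
  have hmuU : μ U = ∑' m : ℕ, (n.choose a : ENNReal) *
      ((ENNReal.ofReal (q ^ m * p)) ^ a * (ENNReal.ofReal (1 - q ^ m)) ^ (n - a)) := by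
    rw [hU, measure_iUnion hVdisj
      (fun m => Finset.measurableSet_biUnion 𝒮 (fun S _ => hDmeas S (m + 1)))]
    refine tsum_congr fun m => ?_
    rw [measure_biUnion_finset (hSdisj m) (fun S _ => hDmeas S (m + 1))]
    rw [Finset.sum_congr rfl (fun S hS => hDmu S hS m), Finset.sum_const,
      h𝒮, Finset.card_powersetCard, Finset.card_univ, Fintype.card_fin, nsmul_eq_mul]
  -- convert to real
  have h1qm : ∀ m : ℕ, (0 : ℝ) ≤ 1 - q ^ m := fun m => by
    have := pow_le_one₀ hq0 (le_of_lt hq1) (n := m)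
    linarith
  have hterm_real : ∀ m : ℕ, (n.choose a : ENNReal) *
      ((ENNReal.ofReal (q ^ m * p)) ^ a * (ENNReal.ofReal (1 - q ^ m)) ^ (n - a))
      = ENNReal.ofReal ((n.choose a : ℝ) * p ^ a * ((q ^ m) ^ a * (1 - q ^ m) ^ (n - a))) := by
    intro m
    rw [← ENNReal.ofReal_pow (mul_nonneg (pow_nonneg hq0 m) (le_of_lt hp.1)),
      ← ENNReal.ofReal_pow (h1qm m), ← ENNReal.ofReal_mul
        (pow_nonneg (mul_nonneg (pow_nonneg hq0 m) (le_of_lt hp.1)) a),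
      ← ENNReal.ofReal_natCast (n.choose a), ← ENNReal.ofReal_mul (Nat.cast_nonneg _)]
    congr 1
    ring
  have hsum0 : Summable (fun m : ℕ => (q ^ m) ^ a * (1 - q ^ m) ^ (n - a)) := by
    refine Summable.of_nonneg_of_le
      (fun m => mul_nonneg (pow_nonneg (pow_nonneg hq0 m) a) (pow_nonneg (h1qm m) _))
      (fun m => ?_) (summable_geometric_of_lt_one (pow_nonneg hq0 a)
        (pow_lt_one₀ hq0 hq1 (by omega)))
    calc (q ^ m) ^ a * (1 - q ^ m) ^ (n - a)
        ≤ (q ^ m) ^ a * 1 := by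
          refine mul_le_mul_of_nonneg_left ?_ (pow_nonneg (pow_nonneg hq0 m) a)
          exact pow_le_one₀ (h1qm m) (by nlinarith [pow_nonneg hq0 m])
      _ = (q ^ a) ^ m := by rw [mul_one, ← pow_mul, ← pow_mul, Nat.mul_comm]
  have hsum : Summable (fun m : ℕ =>
      (n.choose a : ℝ) * p ^ a * ((q ^ m) ^ a * (1 - q ^ m) ^ (n - a))) :=
    hsum0.mul_left _
  have hnng : ∀ m : ℕ, 0 ≤ (n.choose a : ℝ) * p ^ a * ((q ^ m) ^ a * (1 - q ^ m) ^ (n - a)) :=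
    fun m => mul_nonneg (mul_nonneg (Nat.cast_nonneg _) (pow_nonneg (le_of_lt hp.1) a))
      (mul_nonneg (pow_nonneg (pow_nonneg hq0 m) a) (pow_nonneg (h1qm m) _))
  rw [hmuE, hmuU, tsum_congr hterm_real, ← ENNReal.ofReal_tsum_of_nonneg hnng hsum,
    ENNReal.toReal_ofReal (tsum_nonneg hnng), tsum_mul_left,
    real_sum hq0 hq1 a (n - a) ha]
end

section
/- Let n ≥ 2, p ∈ (0,1), q = 1 - p, and let W_{n,p} have distribution WGeo(n,p). Then the expectation satisfies E[W_{n,p}] = (n·p/q)·∑_{b=0}^{n-1} C(n-1,b)·(-1)^b/(1 - q^(b+1)), where C(·,·) denotes binomial coefficients. -/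
open MeasureTheory ProbabilityTheory
open scoped ENNReal

section Aux
variable {Ω : Type*} [MeasurableSpace Ω] (μ : Measure Ω) [IsProbabilityMeasure μ]

lemma geom_fin' (p : ℝ) (m : ℕ) : ∑ k ∈ Finset.range m, (1-p)^k * p = 1 - (1-p)^m := by
  induction m with
  | zero => simp
  | succ m ih => rw [Finset.sum_range_succ, ih, pow_succ]; ring

set_option maxHeartbeats 1000000 in
lemma geom_zero {X : Ω → ℕ} (hX : Measurable X) (p : ℝ) (hp0 : 0 < p) (hp1 : p < 1)
    (hgeom : ∀ m : ℕ, 1 ≤ m → μ {ω | X ω = m} = ENNReal.ofReal ((1 - p) ^ (m - 1) * p)) :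
    μ {ω | X ω = 0} = 0 := by
  have hq0 : (0:ℝ) ≤ 1 - p := by linarith
  have hq1 : 1 - p < 1 := by linarith
  have hdisj : Pairwise (Function.onFun Disjoint fun m : ℕ => {ω | X ω = m}) := by
    intro a b hab
    refine Set.disjoint_left.mpr fun ω h1 h2 => hab ?_
    exact (h1 : X ω = a).symm.trans h2
  have hmeas : ∀ m : ℕ, MeasurableSet {ω | X ω = m} := fun m => hX (measurableSet_singleton m)
  have hU : (⋃ m : ℕ, {ω | X ω = m}) = Set.univ := by
    ext ω; simp
  have h1 : ∑' m : ℕ, μ {ω | X ω = m} = 1 := by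
    have h := measure_iUnion (μ := μ) hdisj hmeas
    rw [hU, measure_univ] at h
    exact h.symm
  have h2 : ∑' m : ℕ, μ {ω | X ω = m}
      = μ {ω | X ω = 0} + ∑' m : ℕ, μ {ω | X ω = m + 1} :=
    tsum_eq_zero_add' ENNReal.summable
  have h3 : ∑' m : ℕ, μ {ω | X ω = m + 1} = 1 := by
    have he : ∀ m : ℕ, μ {ω | X ω = m + 1} = ENNReal.ofReal ((1-p)^m * p) := by
      intro m; rw [hgeom (m+1) (by omega)]; simp
    rw [tsum_congr he, ← ENNReal.ofReal_tsum_of_nonneg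
      (fun m => mul_nonneg (pow_nonneg hq0 m) hp0.le)
      ((summable_geometric_of_lt_one hq0 hq1).mul_right p)]
    rw [tsum_mul_right, tsum_geometric_of_lt_one hq0 hq1]
    have hx : (1 - (1-p))⁻¹ * p = 1 := by
      rw [show 1 - (1-p) = p by ring]
      field_simp
    rw [hx]
    simp
  rw [h1, h3] at h2
  exact (ENNReal.add_left_inj (show (1:ℝ≥0∞) ≠ ⊤ by simp)).mp
    (show μ {ω | X ω = 0} + 1 = 0 + 1 by rw [zero_add, ← h2])

lemma geom_Iic {X : Ω → ℕ} (hX : Measurable X) (p : ℝ) (hp0 : 0 < p) (hp1 : p < 1)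
    (hgeom : ∀ m : ℕ, 1 ≤ m → μ {ω | X ω = m} = ENNReal.ofReal ((1 - p) ^ (m - 1) * p))
    (m : ℕ) : μ (X ⁻¹' Set.Iic m) = ENNReal.ofReal (1 - (1-p)^m) := by
  have hq0 : (0:ℝ) ≤ 1 - p := by linarith
  have hU : X ⁻¹' Set.Iic m = ⋃ k ∈ Finset.range (m+1), {ω | X ω = k} := by
    ext ω
    simp [Nat.lt_succ_iff]
  have hdisj : (↑(Finset.range (m+1)) : Set ℕ).PairwiseDisjoint fun k => {ω | X ω = k} := by
    intro a _ b _ hab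
    refine Set.disjoint_left.mpr fun ω h1 h2 => hab ((h1 : X ω = a).symm.trans h2)
  rw [hU, measure_biUnion_finset hdisj (fun k _ => hX (measurableSet_singleton k))]
  rw [Finset.sum_range_succ', geom_zero μ hX p hp0 hp1 hgeom, add_zero]
  have he : ∀ k ∈ Finset.range m, μ {ω | X ω = k + 1} = ENNReal.ofReal ((1-p)^k * p) := by
    intro k _
    rw [hgeom (k+1) (by omega)]
    simp
  rw [Finset.sum_congr rfl he, ← ENNReal.ofReal_sum_of_nonneg
    (fun k _ => mul_nonneg (pow_nonneg hq0 k) hp0.le), geom_fin' p m]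

lemma max_event_meas (n : ℕ) (hn : 2 ≤ n) (p : ℝ) (hp0 : 0 < p) (hp1 : p < 1)
    (X : Fin n → Ω → ℕ)
    (hmeas : ∀ i, Measurable (X i))
    (hindep : iIndepFun X μ)
    (hgeom : ∀ i, ∀ m : ℕ, 1 ≤ m →
      μ {ω | X i ω = m} = ENNReal.ofReal ((1 - p) ^ (m - 1) * p)) (i : Fin n) :
    μ {ω | ∀ j, X j ω ≤ X i ω}
      = ENNReal.ofReal (∑' m : ℕ, (1-p)^m * p * (1 - (1-p)^(m+1))^(n-1)) := by
  classical
  have hq0 : (0:ℝ) ≤ 1 - p := by linarith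
  have hq1 : 1 - p < 1 := by linarith
  have hqm : ∀ m : ℕ, (0:ℝ) ≤ 1 - (1-p)^(m+1) ∧ 1 - (1-p)^(m+1) ≤ 1 := by
    intro m
    have h1 : (1-p)^(m+1) < 1 := pow_lt_one₀ hq0 hq1 (Nat.succ_ne_zero m)
    have h2 : (0:ℝ) ≤ (1-p)^(m+1) := pow_nonneg hq0 _
    constructor <;> linarith
  set A : ℕ → Set Ω := fun m => ⋂ j, X j ⁻¹' (if j = i then ({m} : Set ℕ) else Set.Iic m)
    with hA
  have hUnion : {ω | ∀ j, X j ω ≤ X i ω} = ⋃ m, A m := by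
    ext ω
    simp only [hA, Set.mem_iUnion, Set.mem_iInter, Set.mem_setOf_eq, Set.mem_preimage]
    constructor
    · intro h
      refine ⟨X i ω, fun j => ?_⟩
      by_cases hj : j = i
      · simp [hj]
      · simp [hj, h j]
    · rintro ⟨m, hm⟩ j
      have hi := hm i
      rw [if_pos rfl] at hi
      have hieq : X i ω = m := hi
      by_cases hj : j = i
      · rw [hj]
      · have hj' := hm j
        rw [if_neg hj] at hj'
        have : X j ω ≤ m := hj'
        rw [hieq]
        exact this
  have hAmeas : ∀ m, MeasurableSet (A m) :=
    fun m => MeasurableSet.iInter fun j => (hmeas j) trivial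
  have hAdisj : Pairwise (Function.onFun Disjoint A) := by
    intro a b hab
    refine Set.disjoint_left.mpr fun ω ha hb => hab ?_
    have ha' := Set.mem_iInter.mp ha i
    have hb' := Set.mem_iInter.mp hb i
    rw [Set.mem_preimage, if_pos rfl] at ha' hb'
    exact (ha' : X i ω = a).symm.trans hb'
  rw [hUnion, measure_iUnion hAdisj hAmeas]
  -- value of each piece via independence
  have hAval : ∀ m : ℕ, μ (A m)
      = μ {ω | X i ω = m} * ENNReal.ofReal (1 - (1-p)^m) ^ (n-1) := by
    intro m
    have hprod := hindep.measure_inter_preimage_eq_mul Finset.univ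
      (sets := fun j => if j = i then ({m} : Set ℕ) else Set.Iic m) (fun j _ => trivial)
    have hAe : A m = ⋂ j ∈ Finset.univ, X j ⁻¹' (if j = i then ({m}:Set ℕ) else Set.Iic m) := by
      simp [hA]
    rw [hAe, hprod, ← Finset.mul_prod_erase Finset.univ _ (Finset.mem_univ i)]
    have h1 : X i ⁻¹' (if i = i then ({m}:Set ℕ) else Set.Iic m) = {ω | X i ω = m} := by
      rw [if_pos rfl]
      rfl
    have h2 : ∀ j ∈ Finset.univ.erase i,
        μ (X j ⁻¹' (if j = i then ({m}:Set ℕ) else Set.Iic m))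
          = ENNReal.ofReal (1 - (1-p)^m) := by
      intro j hj
      rw [if_neg (Finset.ne_of_mem_erase hj), geom_Iic μ (hmeas j) p hp0 hp1 (hgeom j)]
    rw [h1, Finset.prod_congr rfl h2, Finset.prod_const,
      Finset.card_erase_of_mem (Finset.mem_univ i), Finset.card_univ, Fintype.card_fin]
  have hA0 : μ (A 0) = 0 := by
    refine le_antisymm ?_ zero_le
    have hsub : A 0 ⊆ {ω | X i ω = 0} := by
      intro ω hω
      have := Set.mem_iInter.mp hω i
      rw [Set.mem_preimage, if_pos rfl] at this
      exact this
    calc μ (A 0) ≤ μ {ω | X i ω = 0} := measure_mono hsub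
      _ = 0 := geom_zero μ (hmeas i) p hp0 hp1 (hgeom i)
  have hAsucc : ∀ m : ℕ, μ (A (m+1))
      = ENNReal.ofReal ((1-p)^m * p * (1 - (1-p)^(m+1))^(n-1)) := by
    intro m
    rw [hAval (m+1), hgeom i (m+1) (by omega)]
    simp only [Nat.add_sub_cancel]
    rw [← ENNReal.ofReal_pow ((hqm m).1),
      ← ENNReal.ofReal_mul (mul_nonneg (pow_nonneg hq0 m) hp0.le)]
  rw [tsum_eq_zero_add' ENNReal.summable, hA0, zero_add, tsum_congr hAsucc,
    ← ENNReal.ofReal_tsum_of_nonneg]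
  · exact fun m => mul_nonneg (mul_nonneg (pow_nonneg hq0 m) hp0.le)
      (pow_nonneg (hqm m).1 _)
  · refine Summable.of_nonneg_of_le
      (fun m => mul_nonneg (mul_nonneg (pow_nonneg hq0 m) hp0.le)
        (pow_nonneg (hqm m).1 _))
      (fun m => ?_) (summable_geometric_of_lt_one hq0 hq1)
    have hb1 : (1 - (1-p)^(m+1))^(n-1) ≤ 1 := by
      exact pow_le_one₀ (hqm m).1 (hqm m).2
    calc (1-p)^m * p * (1 - (1-p)^(m+1))^(n-1)
        ≤ (1-p)^m * 1 * 1 := by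
          apply mul_le_mul
          · apply mul_le_mul le_rfl hp1.le hp0.le (pow_nonneg hq0 m)
          · exact hb1
          · exact pow_nonneg (hqm m).1 _
          · positivity
      _ = (1-p)^m := by ring

end Aux


lemma expand_pow (x : ℝ) (k : ℕ) :
    (1 - x) ^ k = ∑ b ∈ Finset.range (k + 1), (k.choose b : ℝ) * (-1) ^ b * x ^ b := by
  have h := add_pow (-x) 1 k
  rw [show (1 : ℝ) - x = -x + 1 by ring, h]
  refine Finset.sum_congr rfl fun b _ => ?_
  rw [neg_pow]
  ring

lemma geom_fin (p : ℝ) (m : ℕ) : ∑ k ∈ Finset.range m, (1-p)^k * p = 1 - (1-p)^m := by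
  induction m with
  | zero => simp
  | succ m ih => rw [Finset.sum_range_succ, ih, pow_succ]; ring

lemma term_aux (c p q : ℝ) (b : ℕ) (hq : q ≠ 0) (h : 1 - q^(b+1) ≠ 0) :
    c * (p * q^b) * (1 - q^(b+1))⁻¹ - (p/q) * (c / (1 - q^(b+1))) = -(p/q) * c := by
  field_simp
  ring

lemma key_sum (n : ℕ) (hn : 2 ≤ n) (p : ℝ) (hp0 : 0 < p) (hp1 : p < 1) :
    (n : ℝ) * ∑' m : ℕ, (1-p)^m * p * (1 - (1-p)^(m+1))^(n-1)
      = (n * p / (1 - p)) *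
          ∑ b ∈ Finset.range n,
            ((n - 1).choose b : ℝ) * (-1) ^ b / (1 - (1 - p) ^ (b + 1)) := by
  set q : ℝ := 1 - p with hqdef
  have hq0 : 0 < q := by rw [hqdef]; linarith
  have hq1 : q < 1 := by rw [hqdef]; linarith
  have hqb0 : ∀ b : ℕ, (0:ℝ) ≤ q ^ (b+1) := fun b => pow_nonneg hq0.le _
  have hqb1 : ∀ b : ℕ, q ^ (b+1) < 1 := fun b => pow_lt_one₀ hq0.le hq1 (Nat.succ_ne_zero b)
  have hne : ∀ b : ℕ, 1 - q ^ (b+1) ≠ 0 := fun b => ne_of_gt (by linarith [hqb1 b])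
  have hrange : n - 1 + 1 = n := by omega
  have hexp : ∀ m : ℕ, q^m * p * (1 - q^(m+1))^(n-1)
      = ∑ b ∈ Finset.range n, ((n-1).choose b : ℝ) * (-1)^b * (p * q^b) * (q^(b+1))^m := by
    intro m
    rw [expand_pow (q^(m+1)) (n-1), hrange, Finset.mul_sum]
    refine Finset.sum_congr rfl fun b _ => ?_
    rw [← pow_mul, ← pow_mul]
    ring
  have hsummable : ∀ b ∈ Finset.range n, Summable (fun m : ℕ =>
      ((n-1).choose b : ℝ) * (-1)^b * (p * q^b) * (q^(b+1))^m) :=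
    fun b _ => (summable_geometric_of_lt_one (hqb0 b) (hqb1 b)).mul_left _
  rw [tsum_congr hexp, Summable.tsum_finsetSum hsummable]
  have htsum : ∀ b ∈ Finset.range n,
      (∑' m : ℕ, ((n-1).choose b : ℝ) * (-1)^b * (p * q^b) * (q^(b+1))^m)
        = ((n-1).choose b : ℝ) * (-1)^b * (p * q^b) * (1 - q^(b+1))⁻¹ := by
    intro b _
    rw [tsum_mul_left, tsum_geometric_of_lt_one (hqb0 b) (hqb1 b)]
  rw [Finset.sum_congr rfl htsum]
  -- alternating sum is zero
  have halt : ∑ b ∈ Finset.range n, ((n-1).choose b : ℝ) * (-1)^b = 0 := by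
    have h0 : (∑ m ∈ Finset.range n, (-1:ℤ)^m * ((n-1).choose m : ℤ)) = 0 := by
      have := Int.alternating_sum_range_choose (n := n-1)
      rw [hrange] at this
      rw [this, if_neg (by omega)]
    calc ∑ b ∈ Finset.range n, ((n-1).choose b : ℝ) * (-1)^b
        = ((∑ m ∈ Finset.range n, (-1:ℤ)^m * ((n-1).choose m : ℤ) : ℤ) : ℝ) := by
          push_cast; exact Finset.sum_congr rfl fun _ _ => by ring
      _ = 0 := by rw [h0]; norm_num
  have hterm : ∀ b ∈ Finset.range n,
      ((n-1).choose b : ℝ) * (-1)^b * (p * q^b) * (1 - q^(b+1))⁻¹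
        - (p/q) * (((n-1).choose b : ℝ) * (-1)^b / (1 - q^(b+1)))
      = -(p/q) * (((n-1).choose b : ℝ) * (-1)^b) := by
    intro b _
    exact term_aux _ p q b hq0.ne' (hne b)
  have key : ∑ b ∈ Finset.range n, ((n-1).choose b : ℝ) * (-1)^b * (p * q^b) * (1 - q^(b+1))⁻¹
      = (p/q) * ∑ b ∈ Finset.range n, (((n-1).choose b : ℝ) * (-1)^b / (1 - q^(b+1))) := by
    rw [← sub_eq_zero, Finset.mul_sum, ← Finset.sum_sub_distrib,
      Finset.sum_congr rfl hterm, ← Finset.mul_sum, halt, mul_zero]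
  rw [key]
  ring


/-- For `W_{n,p} ~ WGeo(n,p)` (the number of variables attaining the
maximum of `n ≥ 2` independent `Geo(p)` variables) and `q = 1 - p`,
`E[W_{n,p}] = (n·p/q)·∑_{b=0}^{n-1} C(n-1,b)·(-1)^b/(1 - q^(b+1))`. -/
theorem lge_winners_expectation
    {Ω : Type*} [MeasurableSpace Ω] (μ : Measure Ω) [IsProbabilityMeasure μ]
    (n : ℕ) (hn : 2 ≤ n) (p : ℝ) (hp : p ∈ Set.Ioo (0 : ℝ) 1)
    (X : Fin n → Ω → ℕ)
    (hmeas : ∀ i, Measurable (X i))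
    (hindep : iIndepFun X μ)
    (hgeom : ∀ i, ∀ m : ℕ, 1 ≤ m →
      μ {ω | X i ω = m} = ENNReal.ofReal ((1 - p) ^ (m - 1) * p)) :
    ∫ ω, (((Finset.univ.filter
        fun i => X i ω = Finset.univ.sup fun j => X j ω).card : ℕ) : ℝ) ∂μ
      = (n * p / (1 - p)) *
          ∑ b ∈ Finset.range n,
            ((n - 1).choose b : ℝ) * (-1) ^ b / (1 - (1 - p) ^ (b + 1)) := by
  obtain ⟨hp0, hp1⟩ := hp
  classical
  have hq0 : (0:ℝ) ≤ 1 - p := by linarith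
  have hq1 : 1 - p < 1 := by linarith
  have hqm : ∀ m : ℕ, (0:ℝ) ≤ 1 - (1-p)^(m+1) := by
    intro m
    have h1 : (1-p)^(m+1) < 1 := pow_lt_one₀ hq0 hq1 (Nat.succ_ne_zero m)
    linarith
  have hS : (0:ℝ) ≤ ∑' m : ℕ, (1-p)^m * p * (1 - (1-p)^(m+1))^(n-1) :=
    tsum_nonneg fun m => mul_nonneg (mul_nonneg (pow_nonneg hq0 m) hp0.le)
      (pow_nonneg (hqm m) _)
  have hEmeas : ∀ i : Fin n, MeasurableSet {ω | ∀ j, X j ω ≤ X i ω} := by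
    intro i
    have he : {ω | ∀ j, X j ω ≤ X i ω} = ⋂ j, {ω | X j ω ≤ X i ω} := by
      ext ω; simp
    rw [he]
    exact MeasurableSet.iInter fun j => measurableSet_le (hmeas j) (hmeas i)
  have hf : ∀ ω, (((Finset.univ.filter
        fun i => X i ω = Finset.univ.sup fun j => X j ω).card : ℕ) : ℝ)
      = ∑ i : Fin n, Set.indicator {ω' | ∀ j, X j ω' ≤ X i ω'} (fun _ => (1:ℝ)) ω := by
    intro ω
    rw [Finset.card_filter]
    push_cast
    refine Finset.sum_congr rfl fun i _ => ?_
    rw [Set.indicator_apply]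
    simp only [Set.mem_setOf_eq]
    by_cases h : ∀ j, X j ω ≤ X i ω
    · rw [if_pos h, if_pos (le_antisymm (Finset.le_sup (Finset.mem_univ i))
        (Finset.sup_le fun j _ => h j))]
    · have hne : ¬ (X i ω = Finset.univ.sup fun j => X j ω) := by
        intro hEq
        refine h fun j => ?_
        have hle := Finset.le_sup (f := fun k => X k ω) (Finset.mem_univ j)
        rw [← hEq] at hle
        exact hle
      rw [if_neg h, if_neg hne]
  rw [integral_congr_ae (Filter.Eventually.of_forall hf)]
  rw [integral_finset_sum _ (fun i _ => (integrable_const (1:ℝ)).indicator (hEmeas i))]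
  have hterm : ∀ i ∈ Finset.univ, (∫ ω, Set.indicator {ω' | ∀ j, X j ω' ≤ X i ω'}
        (fun _ => (1:ℝ)) ω ∂μ)
      = (∑' m : ℕ, (1-p)^m * p * (1 - (1-p)^(m+1))^(n-1)) := by
    intro i _
    rw [integral_indicator_const (1:ℝ) (hEmeas i), measureReal_def,
      max_event_meas μ n hn p hp0 hp1 X hmeas hindep hgeom i,
      ENNReal.toReal_ofReal hS, smul_eq_mul, mul_one]
  rw [Finset.sum_congr rfl hterm, Finset.sum_const, Finset.card_univ, Fintype.card_fin,
    nsmul_eq_mul]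
  exact key_sum n hn p hp0 hp1
end

section
/- Let p ∈ (0,1), Q = 1/(1-p), and define φ_p(a) = p^a/(a·ln Q) + ((a+1)²/(12a))·p^a·ln Q for integers a ≥ 1. Then for every integer a ≥ 1, φ_p(a+1)/φ_p(a) < 2p. -/
/-- The function `φ_p(a) = p^a/(a·ln Q) + ((a+1)²/(12a))·p^a·ln Q`, where `Q = 1/(1-p)`. -/
noncomputable def lgePhi (p : ℝ) (a : ℕ) : ℝ :=
  p ^ a / (a * Real.log (1 / (1 - p)))
    + (((a : ℝ) + 1) ^ 2 / (12 * a)) * p ^ a * Real.log (1 / (1 - p))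

/-- For `p ∈ (0,1)` and every integer `a ≥ 1`,
`φ_p(a+1)/φ_p(a) < 2p`. -/
theorem lgePhi_ratio_lt
    (p : ℝ) (hp : p ∈ Set.Ioo (0 : ℝ) 1) (a : ℕ) (ha : 1 ≤ a) :
    lgePhi p (a + 1) / lgePhi p a < 2 * p := by
  obtain ⟨hp0, hp1⟩ := hp
  set L := Real.log (1 / (1 - p)) with hLdef
  have hL : 0 < L := Real.log_pos (by rw [lt_div_iff₀ (by linarith)]; linarith)
  have hA : (1 : ℝ) ≤ (a : ℝ) := by exact_mod_cast ha
  have hA0 : (0 : ℝ) < a := by linarith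
  have hx : 0 < p ^ a := pow_pos hp0 a
  have hφa : 0 < lgePhi p a := by
    unfold lgePhi
    have h1 : 0 < p ^ a / (↑a * L) := div_pos hx (by positivity)
    have h2 : 0 < (((a : ℝ) + 1) ^ 2 / (12 * a)) * p ^ a * L := by positivity
    linarith
  rw [div_lt_iff₀ hφa]
  unfold lgePhi
  push_cast
  rw [pow_succ]
  have hy : 0 < p ^ a * p * L := by positivity
  have h1 : p ^ a * p / (((a:ℝ) + 1) * L) < 2 * p * (p ^ a / ((a:ℝ) * L)) := by
    have e2 : 2 * p * (p ^ a / ((a:ℝ) * L)) = (2 * p * p ^ a) / ((a:ℝ) * L) := by ring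
    rw [e2, div_lt_div_iff₀ (by positivity) (by positivity)]
    nlinarith [hy]
  have h2 : (((a:ℝ) + 1 + 1) ^ 2 / (12 * ((a:ℝ) + 1))) * (p ^ a * p) * L
      < 2 * p * ((((a:ℝ) + 1) ^ 2 / (12 * (a:ℝ))) * p ^ a * L) := by
    have e1 : (((a:ℝ) + 1 + 1) ^ 2 / (12 * ((a:ℝ) + 1))) * (p ^ a * p) * L
        = (((a:ℝ) + 1 + 1) ^ 2 * (p ^ a * p) * L) / (12 * ((a:ℝ) + 1)) := by ring
    have e2 : 2 * p * ((((a:ℝ) + 1) ^ 2 / (12 * (a:ℝ))) * p ^ a * L)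
        = (2 * p * (((a:ℝ) + 1) ^ 2 * p ^ a * L)) / (12 * (a:ℝ)) := by ring
    rw [e1, e2, div_lt_div_iff₀ (by positivity) (by positivity)]
    have hcube : 0 < (a:ℝ)^3 + 2*(a:ℝ)^2 + 2*(a:ℝ) + 2 := by positivity
    nlinarith [mul_pos hy hcube]
  calc p ^ a * p / (((a:ℝ) + 1) * L)
        + (((a:ℝ) + 1 + 1) ^ 2 / (12 * ((a:ℝ) + 1))) * (p ^ a * p) * L
      < 2 * p * (p ^ a / ((a:ℝ) * L))
        + 2 * p * ((((a:ℝ) + 1) ^ 2 / (12 * (a:ℝ))) * p ^ a * L) := add_lt_add h1 h2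
    _ = 2 * p * (p ^ a / ((a:ℝ) * L) + (((a:ℝ) + 1) ^ 2 / (12 * (a:ℝ))) * p ^ a * L) := by ring
end

section
/- Let n ≥ 2 and L ≥ 1 be integers with L ≤ (1/2)·ln n + (1+γ)/2, where γ is the Euler–Mascheroni constant. Then for every probability vector p ∈ Σ_L there exists an integer Q with 2 ≤ Q ≤ n such that Pr[S_{p,Q}] < 1/2 (i.e. MSP(L,n) < 1/2). -/
open MeasureTheory ProbabilityTheory
open scoped ENNReal

private lemma urns_aux_union_bound {L : ℕ} (p : Fin L → ℝ) (hp0 : ∀ i, 0 ≤ p i)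
    (hp1 : ∀ i, p i ≤ 1) {Q : ℕ} {Ω : Type*} [MeasurableSpace Ω]
    (μ : Measure Ω) [IsProbabilityMeasure μ]
    (X : Fin Q → Ω → Fin L) (hmeas : ∀ j, Measurable (X j))
    (hindep : iIndepFun X μ)
    (hdist : ∀ j i, μ {ω | X j ω = i} = ENNReal.ofReal (p i)) :
    (μ (⋃ i, {ω | (Finset.univ.filter fun j => X j ω = i).card = 1})).toReal
      ≤ ∑ i, (Q : ℝ) * (p i * (1 - p i) ^ (Q - 1)) := by
  have hpre : ∀ (k : Fin Q) (i : Fin L), X k ⁻¹' ({i} : Set (Fin L)) = {ω | X k ω = i} := by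
    intro k i; ext ω; simp [Set.mem_preimage]
  have key : ∀ i, μ {ω | (Finset.univ.filter fun j => X j ω = i).card = 1}
      ≤ (Q : ℝ≥0∞) * (ENNReal.ofReal (p i) * ENNReal.ofReal (1 - p i) ^ (Q - 1)) := by
    intro i
    have hsub : {ω | (Finset.univ.filter fun j => X j ω = i).card = 1} ⊆
        ⋃ j : Fin Q, ⋂ k : Fin Q,
          X k ⁻¹' (if k = j then ({i} : Set (Fin L)) else ({i} : Set (Fin L))ᶜ) := by
      intro ω hω
      simp only [Set.mem_setOf_eq, Finset.card_eq_one] at hω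
      obtain ⟨j, hj⟩ := hω
      refine Set.mem_iUnion.2 ⟨j, Set.mem_iInter.2 fun k => ?_⟩
      by_cases hkj : k = j
      · subst hkj
        have : k ∈ Finset.univ.filter fun j => X j ω = i := by
          rw [hj]; exact Finset.mem_singleton_self k
        simp only [Finset.mem_filter] at this
        simp [this.2]
      · have : k ∉ Finset.univ.filter fun j => X j ω = i := by
          rw [hj]; simpa using hkj
        simp only [Finset.mem_filter, Finset.mem_univ, true_and] at this
        simp [hkj, this]
    calc μ {ω | (Finset.univ.filter fun j => X j ω = i).card = 1}
        ≤ μ (⋃ j : Fin Q, ⋂ k : Fin Q,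
            X k ⁻¹' (if k = j then ({i} : Set (Fin L)) else ({i} : Set (Fin L))ᶜ)) :=
          measure_mono hsub
      _ ≤ ∑' j : Fin Q, μ (⋂ k : Fin Q,
            X k ⁻¹' (if k = j then ({i} : Set (Fin L)) else ({i} : Set (Fin L))ᶜ)) :=
          measure_iUnion_le _
      _ = ∑ j : Fin Q, μ (⋂ k : Fin Q,
            X k ⁻¹' (if k = j then ({i} : Set (Fin L)) else ({i} : Set (Fin L))ᶜ)) :=
          tsum_fintype _
      _ = ∑ j : Fin Q, (ENNReal.ofReal (p i) * ENNReal.ofReal (1 - p i) ^ (Q - 1)) := by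
          refine Finset.sum_congr rfl fun j _ => ?_
          rw [hindep.meas_iInter (fun k => ⟨_, ?_, rfl⟩)]
          · have hval : ∀ k : Fin Q,
                μ (X k ⁻¹' (if k = j then ({i} : Set (Fin L)) else ({i} : Set (Fin L))ᶜ))
                = if k = j then ENNReal.ofReal (p i) else ENNReal.ofReal (1 - p i) := by
              intro k
              by_cases hkj : k = j
              · subst hkj
                rw [if_pos rfl, if_pos rfl, hpre k i]; exact hdist k i
              · rw [if_neg hkj, if_neg hkj]
                rw [Set.preimage_compl, hpre k i,
                  prob_compl_eq_one_sub ((hpre k i) ▸ (hmeas k) (measurableSet_singleton i)),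
                  hdist k i, ← ENNReal.ofReal_one, ← ENNReal.ofReal_sub _ (hp0 i)]
            rw [Finset.prod_congr rfl (fun k _ => hval k),
              ← Finset.mul_prod_erase Finset.univ _ (Finset.mem_univ j), if_pos rfl]
            congr 1
            rw [Finset.prod_congr rfl
                (fun k hk => if_neg (Finset.ne_of_mem_erase hk)), Finset.prod_const,
              Finset.card_erase_of_mem (Finset.mem_univ j), Finset.card_univ, Fintype.card_fin]
          · split
            · exact measurableSet_singleton i
            · exact (measurableSet_singleton i).compl
      _ = (Q : ℝ≥0∞) * (ENNReal.ofReal (p i) * ENNReal.ofReal (1 - p i) ^ (Q - 1)) := by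
          rw [Finset.sum_const, Finset.card_univ, Fintype.card_fin, nsmul_eq_mul]
  have hnn : ∀ i ∈ (Finset.univ : Finset (Fin L)),
      0 ≤ (Q : ℝ) * (p i * (1 - p i) ^ (Q - 1)) := by
    intro i _
    have h1 : (0:ℝ) ≤ 1 - p i := by linarith [hp1 i]
    exact mul_nonneg (Nat.cast_nonneg Q) (mul_nonneg (hp0 i) (pow_nonneg h1 _))
  refine ENNReal.toReal_le_of_le_ofReal (Finset.sum_nonneg hnn) ?_
  rw [ENNReal.ofReal_sum_of_nonneg hnn]
  calc μ (⋃ i, {ω | (Finset.univ.filter fun j => X j ω = i).card = 1})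
      ≤ ∑' i : Fin L, μ {ω | (Finset.univ.filter fun j => X j ω = i).card = 1} :=
        measure_iUnion_le _
    _ = ∑ i : Fin L, μ {ω | (Finset.univ.filter fun j => X j ω = i).card = 1} := tsum_fintype _
    _ ≤ ∑ i, (Q : ℝ≥0∞) * (ENNReal.ofReal (p i) * ENNReal.ofReal (1 - p i) ^ (Q - 1)) :=
        Finset.sum_le_sum fun i _ => key i
    _ = ∑ i, ENNReal.ofReal ((Q : ℝ) * (p i * (1 - p i) ^ (Q - 1))) := by
        refine Finset.sum_congr rfl fun i _ => ?_
        have h1 : (0:ℝ) ≤ 1 - p i := by linarith [hp1 i]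
        rw [ENNReal.ofReal_mul (by positivity), ENNReal.ofReal_mul (hp0 i),
          ENNReal.ofReal_pow h1, ENNReal.ofReal_natCast]

private lemma urns_aux_geom (q : ℝ) : ∀ n : ℕ, 1 ≤ n →
    ∑ Q ∈ Finset.Icc 2 n, (1 - q) * q ^ (Q - 1) = q - q ^ n := by
  intro n
  induction n with
  | zero => omega
  | succ m ih =>
    intro _
    rcases Nat.lt_or_ge m 1 with h | h
    · interval_cases m
      simp
    · rw [Finset.sum_Icc_succ_top (by omega), ih h, Nat.add_sub_cancel]
      ring

private lemma urns_aux_harmonic (n : ℕ) (hn : 1 ≤ n) :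
    ∑ Q ∈ Finset.Icc 2 n, (1 / (Q : ℝ)) = (harmonic n : ℝ) - 1 := by
  have h1 : (Finset.Icc 1 n) = insert 1 (Finset.Icc 2 n) := by
    ext k; simp only [Finset.mem_Icc, Finset.mem_insert]; omega
  have h2 : (1 : ℕ) ∉ Finset.Icc 2 n := by simp
  have : (harmonic n : ℝ) = ∑ i ∈ Finset.Icc 1 n, ((i : ℝ))⁻¹ := by
    rw [harmonic_eq_sum_Icc]; push_cast; rfl
  rw [this, h1, Finset.sum_insert h2]
  simp [one_div]

/-- If `n ≥ 2`, `L ≥ 1` and `L ≤ (1/2)·ln n + (1+γ)/2` (with `γ` the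
Euler–Mascheroni constant), then for every probability vector `p ∈ Σ_L` there exists an
integer `Q` with `2 ≤ Q ≤ n` such that `Pr[S_{p,Q}] < 1/2`, i.e. `MSP(L,n) < 1/2`. -/
theorem urns_msp_lt_half_of_L_small
    (L : ℕ) (hL : 1 ≤ L) (n : ℕ) (hn : 2 ≤ n)
    (hLn : (L : ℝ) ≤ (1 / 2) * Real.log n + (1 + Real.eulerMascheroniConstant) / 2)
    (p : Fin L → ℝ) (hp0 : ∀ i, 0 ≤ p i) (hp1 : ∑ i, p i = 1)
    (Ω : ℕ → Type*) [∀ Q, MeasurableSpace (Ω Q)]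
    (μ : ∀ Q, Measure (Ω Q)) [∀ Q, IsProbabilityMeasure (μ Q)]
    (X : ∀ Q, Fin Q → Ω Q → Fin L)
    (hmeas : ∀ Q, 2 ≤ Q → ∀ j, Measurable (X Q j))
    (hindep : ∀ Q, 2 ≤ Q → iIndepFun (X Q) (μ Q))
    (hdist : ∀ Q, 2 ≤ Q → ∀ j i, μ Q {ω | X Q j ω = i} = ENNReal.ofReal (p i)) :
    ∃ Q, 2 ≤ Q ∧ Q ≤ n ∧
      (μ Q (⋃ i, {ω | (Finset.univ.filter fun j => X Q j ω = i).card = 1})).toReal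
        < 1 / 2 := by
  by_cases hL1 : L = 1
  · subst hL1
    refine ⟨2, le_refl 2, hn, ?_⟩
    have hempty : (⋃ i, {ω | (Finset.univ.filter fun j => X 2 j ω = i).card = 1})
        = (∅ : Set (Ω 2)) := by
      ext ω
      simp only [Set.mem_iUnion, Set.mem_setOf_eq, Set.mem_empty_iff_false, iff_false,
        not_exists]
      intro i hi
      have hfil : (Finset.univ.filter fun j : Fin 2 => X 2 j ω = i) = Finset.univ :=
        Finset.filter_true_of_mem (fun j _ => Subsingleton.elim _ _)
      rw [hfil] at hi
      simp at hi
    rw [hempty]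
    simp
  · have hL2 : 2 ≤ L := by omega
    by_contra hc
    push_neg at hc
    have hple : ∀ i, p i ≤ 1 := by
      intro i
      calc p i ≤ ∑ j, p j := Finset.single_le_sum (fun j _ => hp0 j) (Finset.mem_univ i)
        _ = 1 := hp1
    have hex : ∃ i0, p i0 < 1 := by
      by_contra h; push_neg at h
      have h1 : (L : ℝ) ≤ ∑ i, p i := by
        calc (L : ℝ) = ∑ _i : Fin L, (1 : ℝ) := by simp
          _ ≤ ∑ i, p i := Finset.sum_le_sum fun i _ => h i
      rw [hp1] at h1
      have : (2 : ℝ) ≤ (L : ℝ) := by exact_mod_cast hL2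
      linarith
    obtain ⟨i0, hi0⟩ := hex
    have key : ∀ Q ∈ Finset.Icc 2 n,
        (1 / (Q : ℝ)) ≤ 2 * ∑ i, p i * (1 - p i) ^ (Q - 1) := by
      intro Q hQ
      rw [Finset.mem_Icc] at hQ
      have hb := urns_aux_union_bound p hp0 hple (μ Q) (X Q) (hmeas Q hQ.1)
        (hindep Q hQ.1) (hdist Q hQ.1)
      have hr := hc Q hQ.1 hQ.2
      have hsum : ∑ i, (Q : ℝ) * (p i * (1 - p i) ^ (Q - 1))
          = (Q : ℝ) * ∑ i, p i * (1 - p i) ^ (Q - 1) := (Finset.mul_sum _ _ _).symm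
      rw [hsum] at hb
      have hQpos : (0 : ℝ) < (Q : ℝ) := by
        have : (2 : ℝ) ≤ (Q : ℝ) := by exact_mod_cast hQ.1
        linarith
      rw [div_le_iff₀ hQpos]
      nlinarith [hr.trans hb]
    have hsum1 : ∑ Q ∈ Finset.Icc 2 n, (1 / (Q : ℝ))
        ≤ 2 * ∑ i, ((1 - p i) - (1 - p i) ^ n) := by
      calc ∑ Q ∈ Finset.Icc 2 n, (1 / (Q : ℝ))
          ≤ ∑ Q ∈ Finset.Icc 2 n, 2 * ∑ i, p i * (1 - p i) ^ (Q - 1) :=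
            Finset.sum_le_sum key
        _ = 2 * ∑ i, ∑ Q ∈ Finset.Icc 2 n, p i * (1 - p i) ^ (Q - 1) := by
            rw [← Finset.mul_sum, Finset.sum_comm]
        _ = 2 * ∑ i, ((1 - p i) - (1 - p i) ^ n) := by
            congr 1
            refine Finset.sum_congr rfl fun i _ => ?_
            have := urns_aux_geom (1 - p i) n (by omega)
            simp only [sub_sub_cancel] at this
            rw [← this]
    have hharm := urns_aux_harmonic n (by omega)
    have hLsum : ∑ i, (1 - p i) = (L : ℝ) - 1 := by
      rw [Finset.sum_sub_distrib, hp1]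
      simp
    have heps : (1 - p i0) ^ n ≤ ∑ i, (1 - p i) ^ n := by
      refine Finset.single_le_sum (f := fun i => (1 - p i) ^ n) (fun i _ => ?_) (Finset.mem_univ i0)
      have hi := hple i
      exact pow_nonneg (by linarith) n
    have hepspos : 0 < (1 - p i0) ^ n := pow_pos (by linarith) n
    have hγ : Real.log n + Real.eulerMascheroniConstant ≤ (harmonic n : ℝ) := by
      have h := Real.eulerMascheroniConstant_lt_eulerMascheroniSeq' n
      rw [Real.eulerMascheroniSeq', if_neg (by omega)] at h
      linarith
    have hexp : ∑ i, ((1 - p i) - (1 - p i) ^ n)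
        = ((L : ℝ) - 1) - ∑ i, (1 - p i) ^ n := by
      rw [Finset.sum_sub_distrib, hLsum]
    rw [hharm, hexp] at hsum1
    linarith
end

section
/- Let L ≥ 1 be an integer and let n ≥ 2 be an integer with n ≥ exp(2L - (1+γ)), where γ is the Euler–Mascheroni constant. Then for every probability vector p ∈ Σ_L there exists an integer Q with 2 ≤ Q ≤ n such that Pr[S_{p,Q}] < 1/2 (i.e. MSP(L,n) < 1/2). -/
open MeasureTheory ProbabilityTheory Finset

lemma aux_geom (x : ℝ) (n : ℕ) (hn : 2 ≤ n) :
    (1 - x) * ∑ Q ∈ Finset.Icc 2 n, x ^ (Q - 1) = x - x ^ n := by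
  induction n, hn using Nat.le_induction with
  | base => simp [Finset.Icc_self]; ring
  | succ n hn ih =>
      rw [Finset.sum_Icc_succ_top (by omega : 2 ≤ n + 1)]
      rw [mul_add, ih]
      have : n + 1 - 1 = n := by omega
      rw [this]
      ring

lemma aux_harm (n : ℕ) (hn : 2 ≤ n) :
    ∑ Q ∈ Finset.Icc 2 n, (1 : ℝ) / Q = (harmonic n : ℝ) - 1 := by
  have h1 : ∑ Q ∈ Finset.Icc 1 n, (1 : ℝ) / Q = (harmonic n : ℝ) := by
    rw [harmonic_eq_sum_Icc]
    push_cast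
    exact Finset.sum_congr rfl fun i _ => one_div _
  rw [← Finset.insert_Icc_add_one_left_eq_Icc (by omega : 1 ≤ n), Finset.sum_insert (by simp)] at h1
  push_cast at h1 ⊢
  linarith

lemma aux_log_gamma (n : ℕ) (hn : 2 ≤ n) :
    Real.log n + Real.eulerMascheroniConstant < (harmonic n : ℝ) := by
  have := Real.eulerMascheroniConstant_lt_eulerMascheroniSeq' n
  rw [Real.eulerMascheroniSeq', if_neg (by omega)] at this
  linarith

lemma aux_union_bound {L : ℕ} (p : Fin L → ℝ) (hp0 : ∀ i, 0 ≤ p i) (hp1 : ∀ i, p i ≤ 1)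
    {Ω : Type*} [MeasurableSpace Ω] (μ : Measure Ω) [IsProbabilityMeasure μ]
    {Q : ℕ} (X : Fin Q → Ω → Fin L)
    (hmeas : ∀ j, Measurable (X j))
    (hindep : iIndepFun X μ)
    (hdist : ∀ j i, μ {ω | X j ω = i} = ENNReal.ofReal (p i)) :
    (μ (⋃ i, {ω | (Finset.univ.filter fun j => X j ω = i).card = 1})).toReal
      ≤ ∑ i, (Q : ℝ) * p i * (1 - p i) ^ (Q - 1) := by
  have hnn : ∀ i : Fin L, 0 ≤ p i * (1 - p i) ^ (Q - 1) :=
    fun i => mul_nonneg (hp0 i) (pow_nonneg (by linarith [hp1 i]) _)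
  have hnn2 : ∀ i : Fin L, 0 ≤ (Q : ℝ) * (p i * (1 - p i) ^ (Q - 1)) :=
    fun i => mul_nonneg (Nat.cast_nonneg _) (hnn i)
  set F : Fin L → Fin Q → Set Ω :=
    fun i j => ⋂ k, X k ⁻¹' (if k = j then ({i} : Set (Fin L)) else ({i} : Set (Fin L))ᶜ) with hF
  have hsingle : ∀ j (i : Fin L), μ (X j ⁻¹' {i}) = ENNReal.ofReal (p i) := by
    intro j i
    rw [show X j ⁻¹' {i} = {ω | X j ω = i} from by ext ω; simp]
    exact hdist j i
  have hcompl : ∀ j (i : Fin L), μ (X j ⁻¹' ({i} : Set (Fin L))ᶜ) = ENNReal.ofReal (1 - p i) := by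
    intro j i
    rw [Set.preimage_compl, measure_compl ((hmeas j) (measurableSet_singleton i))
      (measure_ne_top _ _), hsingle j i, measure_univ,
      ENNReal.ofReal_sub _ (hp0 i), ENNReal.ofReal_one]
  have hFmeas : ∀ i j, μ (F i j) = ENNReal.ofReal (p i * (1 - p i) ^ (Q - 1)) := by
    intro i j
    have hmul := hindep.measure_inter_preimage_eq_mul (S := Finset.univ)
      (sets := fun k => if k = j then ({i} : Set (Fin L)) else ({i} : Set (Fin L))ᶜ)
      (fun k _ => by
        by_cases h : k = j
        · simp only [h, if_pos rfl]; exact measurableSet_singleton i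
        · simp only [if_neg h]; exact (measurableSet_singleton i).compl)
    have hu : F i j = ⋂ k ∈ Finset.univ,
        X k ⁻¹' (if k = j then ({i} : Set (Fin L)) else ({i} : Set (Fin L))ᶜ) := by
      simp [hF]
    have hfac : ∀ k : Fin Q,
        μ (X k ⁻¹' (if k = j then ({i} : Set (Fin L)) else ({i} : Set (Fin L))ᶜ))
          = if k = j then ENNReal.ofReal (p i) else ENNReal.ofReal (1 - p i) := by
      intro k
      by_cases h : k = j
      · simp only [h, if_pos rfl]; exact hsingle j i
      · simp only [if_neg h]; exact hcompl k i
    rw [hu, hmul, Finset.prod_congr rfl (fun k _ => hfac k),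
      ← Finset.mul_prod_erase Finset.univ _ (Finset.mem_univ j), if_pos rfl,
      Finset.prod_congr rfl (fun k hk => if_neg (Finset.ne_of_mem_erase hk)),
      Finset.prod_const, Finset.card_erase_of_mem (mem_univ j),
      Finset.card_univ, Fintype.card_fin,
      ENNReal.ofReal_mul (hp0 i), ENNReal.ofReal_pow (by linarith [hp1 i])]
  have hsub : ∀ i : Fin L,
      {ω | (Finset.univ.filter fun j => X j ω = i).card = 1} ⊆ ⋃ j, F i j := by
    intro i ω hω
    obtain ⟨j, hj⟩ := Finset.card_eq_one.mp hω
    refine Set.mem_iUnion.mpr ⟨j, Set.mem_iInter.mpr fun k => ?_⟩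
    by_cases hkj : k = j
    · subst hkj
      simp only [if_pos rfl, Set.mem_preimage, Set.mem_singleton_iff]
      have : k ∈ Finset.univ.filter fun j => X j ω = i := by
        rw [hj]; exact Finset.mem_singleton_self k
      exact (Finset.mem_filter.mp this).2
    · simp only [if_neg hkj, Set.mem_preimage, Set.mem_compl_iff, Set.mem_singleton_iff]
      intro hcon
      have : k ∈ Finset.univ.filter fun j => X j ω = i :=
        Finset.mem_filter.mpr ⟨Finset.mem_univ k, hcon⟩
      rw [hj, Finset.mem_singleton] at this
      exact hkj this
  have hbound : μ (⋃ i, {ω | (Finset.univ.filter fun j => X j ω = i).card = 1})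
      ≤ ENNReal.ofReal (∑ i, (Q : ℝ) * p i * (1 - p i) ^ (Q - 1)) := by
    calc μ (⋃ i, {ω | (Finset.univ.filter fun j => X j ω = i).card = 1})
        ≤ ∑' i, μ {ω | (Finset.univ.filter fun j => X j ω = i).card = 1} :=
          measure_iUnion_le _
      _ = ∑ i, μ {ω | (Finset.univ.filter fun j => X j ω = i).card = 1} := tsum_fintype _
      _ ≤ ∑ i, ENNReal.ofReal ((Q : ℝ) * (p i * (1 - p i) ^ (Q - 1))) := by
          refine Finset.sum_le_sum fun i _ => ?_
          calc μ {ω | (Finset.univ.filter fun j => X j ω = i).card = 1}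
              ≤ μ (⋃ j, F i j) := measure_mono (hsub i)
            _ ≤ ∑' j, μ (F i j) := measure_iUnion_le _
            _ = ∑ j : Fin Q, μ (F i j) := tsum_fintype _
            _ = ENNReal.ofReal ((Q : ℝ) * (p i * (1 - p i) ^ (Q - 1))) := by
                rw [Finset.sum_congr rfl fun j _ => hFmeas i j, Finset.sum_const,
                  Finset.card_univ, Fintype.card_fin, nsmul_eq_mul,
                  ENNReal.ofReal_mul (Nat.cast_nonneg Q), ENNReal.ofReal_natCast]
      _ = ENNReal.ofReal (∑ i, (Q : ℝ) * p i * (1 - p i) ^ (Q - 1)) := by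
          rw [← ENNReal.ofReal_sum_of_nonneg fun i _ => hnn2 i]
          exact congrArg ENNReal.ofReal
            (Finset.sum_congr rfl fun i _ => (mul_assoc _ _ _).symm)
  exact ENNReal.toReal_le_of_le_ofReal
    (Finset.sum_nonneg fun i _ => by rw [mul_assoc]; exact hnn2 i) hbound

/-- If `L ≥ 1`, `n ≥ 2` and `n ≥ exp(2L - (1+γ))` (with `γ` the
Euler–Mascheroni constant), then for every probability vector `p ∈ Σ_L` there exists an
integer `Q` with `2 ≤ Q ≤ n` such that `Pr[S_{p,Q}] < 1/2`, i.e. `MSP(L,n) < 1/2`. -/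
theorem urns_msp_lt_half_of_n_large
    (L : ℕ) (hL : 1 ≤ L) (n : ℕ) (hn : 2 ≤ n)
    (hLn : Real.exp (2 * L - (1 + Real.eulerMascheroniConstant)) ≤ (n : ℝ))
    (p : Fin L → ℝ) (hp0 : ∀ i, 0 ≤ p i) (hp1 : ∑ i, p i = 1)
    (Ω : ℕ → Type*) [∀ Q, MeasurableSpace (Ω Q)]
    (μ : ∀ Q, Measure (Ω Q)) [∀ Q, IsProbabilityMeasure (μ Q)]
    (X : ∀ Q, Fin Q → Ω Q → Fin L)
    (hmeas : ∀ Q, 2 ≤ Q → ∀ j, Measurable (X Q j))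
    (hindep : ∀ Q, 2 ≤ Q → iIndepFun (X Q) (μ Q))
    (hdist : ∀ Q, 2 ≤ Q → ∀ j i, μ Q {ω | X Q j ω = i} = ENNReal.ofReal (p i)) :
    ∃ Q, 2 ≤ Q ∧ Q ≤ n ∧
      (μ Q (⋃ i, {ω | (Finset.univ.filter fun j => X Q j ω = i).card = 1})).toReal
        < 1 / 2 := by
  have hple : ∀ i, p i ≤ 1 := by
    intro i
    calc p i ≤ ∑ j, p j := Finset.single_le_sum (fun j _ => hp0 j) (Finset.mem_univ i)
      _ = 1 := hp1
  by_contra hcon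
  push_neg at hcon
  -- hcon : ∀ Q, 2 ≤ Q → Q ≤ n → 1/2 ≤ ...
  by_cases hone : ∃ i, p i = 1
  · -- degenerate case: a point mass
    obtain ⟨i, hi⟩ := hone
    have h2 := hcon 2 le_rfl hn
    have h0 : ∀ j : Fin 2, μ 2 ((X 2 j ⁻¹' ({i} : Set (Fin L)))ᶜ) = 0 := by
      intro j
      rw [measure_compl ((hmeas 2 le_rfl j) (measurableSet_singleton i)) (measure_ne_top _ _),
        show X 2 j ⁻¹' {i} = {ω | X 2 j ω = i} from by ext ω; simp,
        hdist 2 le_rfl j i, hi, ENNReal.ofReal_one, measure_univ, tsub_self]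
    have hsub : (⋃ i', {ω | (Finset.univ.filter fun j => X 2 j ω = i').card = 1})
        ⊆ (X 2 0 ⁻¹' ({i} : Set (Fin L)))ᶜ ∪ (X 2 1 ⁻¹' ({i} : Set (Fin L)))ᶜ := by
      intro ω hω
      by_contra hmem
      simp only [Set.mem_union, Set.mem_compl_iff, Set.mem_preimage,
        Set.mem_singleton_iff, not_or, not_not] at hmem
      obtain ⟨hω0, hω1⟩ := hmem
      have hall : ∀ j : Fin 2, X 2 j ω = i := by
        intro j; fin_cases j <;> assumption
      obtain ⟨i', hi'⟩ := Set.mem_iUnion.mp hω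
      simp only [Set.mem_setOf_eq] at hi'
      by_cases h : i' = i
      · subst h
        rw [Finset.filter_true_of_mem (fun j _ => hall j), Finset.card_univ,
          Fintype.card_fin] at hi'
        omega
      · rw [Finset.filter_false_of_mem (fun j _ => by rw [hall j]; exact fun hc => h hc.symm),
          Finset.card_empty] at hi'
        omega
    have hzero : μ 2 (⋃ i', {ω | (Finset.univ.filter fun j => X 2 j ω = i').card = 1}) = 0 := by
      refine le_antisymm ?_ zero_le
      calc μ 2 (⋃ i', {ω | (Finset.univ.filter fun j => X 2 j ω = i').card = 1})
          ≤ μ 2 ((X 2 0 ⁻¹' ({i} : Set (Fin L)))ᶜ ∪ (X 2 1 ⁻¹' ({i} : Set (Fin L)))ᶜ) :=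
            measure_mono hsub
        _ ≤ μ 2 ((X 2 0 ⁻¹' ({i} : Set (Fin L)))ᶜ) + μ 2 ((X 2 1 ⁻¹' ({i} : Set (Fin L)))ᶜ) :=
            measure_union_le _ _
        _ = 0 := by rw [h0 0, h0 1, add_zero]
    rw [hzero] at h2
    norm_num at h2
  · -- main case: all p i < 1
    push_neg at hone
    have hlt : ∀ i, p i < 1 := fun i => lt_of_le_of_ne (hple i) (hone i)
    -- per-Q inequality
    have hQkey : ∀ Q ∈ Finset.Icc 2 n,
        (1 / 2) * ((1 : ℝ) / Q) ≤ ∑ i, p i * (1 - p i) ^ (Q - 1) := by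
      intro Q hQ
      rw [Finset.mem_Icc] at hQ
      have hb := aux_union_bound p hp0 hple (μ Q) (X Q) (hmeas Q hQ.1) (hindep Q hQ.1)
        (hdist Q hQ.1)
      have hh := hcon Q hQ.1 hQ.2
      have hQpos : (0 : ℝ) < Q := by exact_mod_cast (by omega : 0 < Q)
      have hsum : (1 / 2 : ℝ) ≤ (Q : ℝ) * ∑ i, p i * (1 - p i) ^ (Q - 1) := by
        rw [Finset.mul_sum]
        calc (1/2 : ℝ) ≤ _ := hh
          _ ≤ ∑ i, (Q : ℝ) * p i * (1 - p i) ^ (Q - 1) := hb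
          _ = ∑ i, (Q : ℝ) * (p i * (1 - p i) ^ (Q - 1)) :=
              Finset.sum_congr rfl fun i _ => mul_assoc _ _ _
      rw [mul_comm (1/2 : ℝ), div_mul_eq_mul_div, one_mul, div_le_iff₀ hQpos, mul_comm]
      linarith [hsum]
    -- sum over Q
    have hsum2 : (1 / 2) * ∑ Q ∈ Finset.Icc 2 n, (1 : ℝ) / Q
        ≤ ∑ i, ((1 - p i) - (1 - p i) ^ n) := by
      calc (1 / 2) * ∑ Q ∈ Finset.Icc 2 n, (1 : ℝ) / Q
          = ∑ Q ∈ Finset.Icc 2 n, (1 / 2) * ((1 : ℝ) / Q) := Finset.mul_sum _ _ _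
        _ ≤ ∑ Q ∈ Finset.Icc 2 n, ∑ i, p i * (1 - p i) ^ (Q - 1) :=
            Finset.sum_le_sum hQkey
        _ = ∑ i, ∑ Q ∈ Finset.Icc 2 n, p i * (1 - p i) ^ (Q - 1) := Finset.sum_comm
        _ = ∑ i, ((1 - p i) - (1 - p i) ^ n) := by
            refine Finset.sum_congr rfl fun i _ => ?_
            have hg := aux_geom (1 - p i) n hn
            rw [show (1 - (1 - p i)) = p i from by ring] at hg
            rw [← Finset.mul_sum, hg]
    -- evaluate the right side
    have hsplit : ∑ i, ((1 - p i) - (1 - p i) ^ n)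
        = ((L : ℝ) - 1) - ∑ i, (1 - p i) ^ n := by
      rw [Finset.sum_sub_distrib]
      congr 1
      rw [Finset.sum_sub_distrib, hp1, Finset.sum_const, Finset.card_univ, Fintype.card_fin,
        nsmul_eq_mul, mul_one]
    have hTpos : 0 < ∑ i, (1 - p i) ^ n := by
      have : Nonempty (Fin L) := ⟨⟨0, hL⟩⟩
      exact Finset.sum_pos (fun i _ => pow_pos (by linarith [hlt i]) n) Finset.univ_nonempty
    -- lower bound on the harmonic sum
    have hlog : (2 * (L : ℝ) - (1 + Real.eulerMascheroniConstant)) ≤ Real.log n := by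
      rw [Real.le_log_iff_exp_le (by positivity)]
      exact hLn
    have hharm := aux_log_gamma n hn
    have hA := aux_harm n hn
    -- final contradiction
    rw [hsplit] at hsum2
    rw [hA] at hsum2
    have hL' : (1 : ℝ) ≤ (L : ℝ) := by exact_mod_cast hL
    linarith
end
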